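/- arXiv:2005.05309 — 3 statements merged into one kernel-verified Lean document; each statement's English description precedes it below -/
import Mathlib

section
/- For all γ_t, η_s ∈ Λ̂: Ῡ(γ_t, η_s) ≥ ‖γ_t − η_s‖_0^6 + |s − t|². Consequently, for every t ∈ [0,T] the functional Ῡ restricted to Λ^t × Λ^t is a gauge-type function on Λ^t. -/
set_option linter.unusedVariables false

noncomputable section

open Set Filter Topology

namespace PHJB

/-- Euclidean state space ℝ^d. -/
abbrev E (d : ℕ) : Type := EuclideanSpace ℝ (Fin d)

variable {d n : ℕ}

/-- `‖γ_t - η_s‖₀ = sup_{0 ≤ l ≤ t ∨ s} |γ_t(l ∧ t) - η_s(l ∧ s)|`. -/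
def pairDist (t : ℝ) (γ : ℝ → E d) (s : ℝ) (η : ℝ → E d) : ℝ :=
  sSup ((fun l => ‖γ (min l t) - η (min l s)‖) '' Icc 0 (max t s))

/-- `‖γ_t‖₀ = sup_{0 ≤ s ≤ t} |γ_t(s)|`. -/
def supNorm (t : ℝ) (γ : ℝ → E d) : ℝ :=
  sSup ((fun l => ‖γ l‖) '' Icc 0 t)

/-- `d_∞(γ_t, η_s) = |t - s| + ‖γ_t - η_s‖₀`. -/
def dInfty (t : ℝ) (γ : ℝ → E d) (s : ℝ) (η : ℝ → E d) : ℝ :=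
  |t - s| + pairDist t γ s η

/-- `γ` is càdlàg on `[0,t]`. -/
def IsCadlagOn (t : ℝ) (γ : ℝ → E d) : Prop :=
  (∀ s ∈ Ico (0:ℝ) t, ContinuousWithinAt γ (Ici s) s) ∧
  (∀ s ∈ Ioc (0:ℝ) t, ∃ L, Tendsto γ (nhdsWithin s (Iio s)) (nhds L))

/-- `γ` is continuous on `[0,t]`. -/
def IsContOn (t : ℝ) (γ : ℝ → E d) : Prop :=
  ContinuousOn γ (Icc 0 t)

/-- `(t, γ)` represents an element `γ_t` of `Λ̂^{tBase}` (horizon `T`). -/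
def MemHat (T tBase : ℝ) (t : ℝ) (γ : ℝ → E d) : Prop :=
  tBase ≤ t ∧ t ≤ T ∧ IsCadlagOn t γ

/-- `(t, γ)` represents an element `γ_t` of `Λ^{tBase}` (horizon `T`). -/
def Mem (T tBase : ℝ) (t : ℝ) (γ : ℝ → E d) : Prop :=
  tBase ≤ t ∧ t ≤ T ∧ IsContOn t γ

/-- The functional `S_m(γ_t, η_s)`. -/
def Sm (m : ℕ) (t : ℝ) (γ : ℝ → E d) (s : ℝ) (η : ℝ → E d) : ℝ :=
  if pairDist t γ s η = 0 then 0
  else (pairDist t γ s η ^ (2*m) - ‖γ t - η s‖ ^ (2*m)) ^ 3 / pairDist t γ s η ^ (4*m)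

/-- `Υ^{m,M}(γ_t, η_s) = S_m(γ_t,η_s) + M |γ_t(t) - η_s(s)|^{2m}`. -/
def Ups (m : ℕ) (M : ℝ) (t : ℝ) (γ : ℝ → E d) (s : ℝ) (η : ℝ → E d) : ℝ :=
  Sm m t γ s η + M * ‖γ t - η s‖ ^ (2*m)

/-- `Ῡ^{m,M}(γ_t, η_s) = Υ^{m,M}(γ_t,η_s) + |s - t|²`. -/
def UpsBar (m : ℕ) (M : ℝ) (t : ℝ) (γ : ℝ → E d) (s : ℝ) (η : ℝ → E d) : ℝ :=
  Ups m M t γ s η + (s - t) ^ 2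

/-- `Υ^{m,M}(γ_t) = Υ^{m,M}(γ_t, 0_t)`. -/
def Ups0 (m : ℕ) (M : ℝ) (t : ℝ) (γ : ℝ → E d) : ℝ :=
  Ups m M t γ t (fun _ => 0)

/-- Restriction of a raw function to the values it takes on `[0,t]` (the path `γ_t`,
or its horizontal extension to any later time). -/
def clamp (t : ℝ) (γ : ℝ → E d) : ℝ → E d := fun s => γ (min (max s 0) t)

/-- The horizontal extension `γ_{t,·}` of `γ_t`, as a raw function. -/
def hext (t : ℝ) (γ : ℝ → E d) : ℝ → E d := fun l => γ (min l t)

/-- The vertically bumped path `γ_t^x`. -/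
def vbump (t : ℝ) (γ : ℝ → E d) (x : E d) : ℝ → E d :=
  fun s => if s = t then γ t + x else γ s

/-- The standard basis of ℝ^d. -/
def basis (d : ℕ) (i : Fin d) : E d := EuclideanSpace.single i (1:ℝ)

/-- A path functional only depends on the restriction of the path to `[0,t]`. -/
def Adapted (T tBase : ℝ) (f : ℝ → (ℝ → E d) → ℝ) : Prop :=
  ∀ t γ, MemHat T tBase t γ → f t γ = f t (clamp t γ)

/-- `f ∈ C⁰(Λ̂^{tBase})`: continuity with respect to `d_∞`. -/
def C0Hat (T tBase : ℝ) (f : ℝ → (ℝ → E d) → ℝ) : Prop :=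
  ∀ t γ, MemHat T tBase t γ → ∀ ε > 0, ∃ δ > 0, ∀ s η, MemHat T tBase s η →
    dInfty t γ s η < δ → |f s η - f t γ| < ε

/-- `f ∈ C⁰(Λ^{tBase})`: continuity with respect to `d_∞` on continuous paths. -/
def C0Lam (T tBase : ℝ) (f : ℝ → (ℝ → E d) → ℝ) : Prop :=
  ∀ t γ, Mem T tBase t γ → ∀ ε > 0, ∃ δ > 0, ∀ s η, Mem T tBase s η →
    dInfty t γ s η < δ → |f s η - f t γ| < ε

/-- Polynomial growth in `‖·‖₀`. -/
def PolyGrowth (T tBase : ℝ) (f : ℝ → (ℝ → E d) → ℝ) : Prop :=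
  ∃ C : ℝ, ∃ k : ℕ, 0 ≤ C ∧ ∀ t γ, MemHat T tBase t γ →
    |f t γ| ≤ C * (1 + supNorm t γ) ^ k

/-- An element of `C_p^{1,2}(Λ̂^{tBase})`: a functional `F` together with its
horizontal derivative `Ft`, and first and second vertical derivatives `Fx`, `Fxx`,
all continuous in `d_∞` and of polynomial growth. -/
structure C12pHat (d : ℕ) (T tBase : ℝ) where
  F : ℝ → (ℝ → E d) → ℝ
  Ft : ℝ → (ℝ → E d) → ℝ
  Fx : ℝ → (ℝ → E d) → E d
  Fxx : ℝ → (ℝ → E d) → Matrix (Fin d) (Fin d) ℝ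
  adapted : Adapted T tBase F
  contF : C0Hat T tBase F
  vert : ∀ t γ, MemHat T tBase t γ → ∀ i : Fin d,
    HasDerivAt (fun h : ℝ => F t (vbump t γ (h • basis d i))) (Fx t γ i) 0
  vert2 : ∀ t γ, MemHat T tBase t γ → ∀ i j : Fin d,
    HasDerivAt (fun h : ℝ => Fx t (vbump t γ (h • basis d j)) i) (Fxx t γ j i) 0
  horiz : ∀ t γ, MemHat T tBase t γ → t < T →
    Tendsto (fun h : ℝ => (F (t + h) (clamp t γ) - F t γ) / h)
      (nhdsWithin 0 (Ioi 0)) (nhds (Ft t γ))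
  horizT : ∀ γ, MemHat T tBase T γ →
    Tendsto (fun s => Ft s (clamp s γ)) (nhdsWithin T (Iio T)) (nhds (Ft T γ))
  contFt : C0Hat T tBase Ft
  contFx : ∀ i : Fin d, C0Hat T tBase fun t γ => Fx t γ i
  contFxx : ∀ i j : Fin d, C0Hat T tBase fun t γ => Fxx t γ i j
  growthF : PolyGrowth T tBase F
  growthFt : PolyGrowth T tBase Ft
  growthFx : ∀ i : Fin d, PolyGrowth T tBase fun t γ => Fx t γ i
  growthFxx : ∀ i j : Fin d, PolyGrowth T tBase fun t γ => Fxx t γ i j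

/-- Hilbert–Schmidt (Frobenius) norm of a matrix. -/
def frob {k l : ℕ} (A : Matrix (Fin k) (Fin l) ℝ) : ℝ :=
  Real.sqrt (∑ i, ∑ j, (A i j) ^ 2)

/-- Identification of `Fin k → ℝ` with `EuclideanSpace ℝ (Fin k)`. -/
def toEuc {k : ℕ} (v : Fin k → ℝ) : E k := (WithLp.equiv 2 (Fin k → ℝ)).symm v

/-- The Hamiltonian
`H(γ_t,r,p,l) = sup_u [⟨p, b⟩ + ½ tr(l σ σ^⊤) + q(γ_t, r, σ^⊤ p, u)]`. -/
def hamiltonian (U : Type*) (b : ℝ → (ℝ → E d) → U → E d)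
    (σ' : ℝ → (ℝ → E d) → U → Matrix (Fin d) (Fin n) ℝ)
    (q : ℝ → (ℝ → E d) → ℝ → E n → U → ℝ)
    (t : ℝ) (γ : ℝ → E d) (r : ℝ) (p : E d) (l : Matrix (Fin d) (Fin d) ℝ) : ℝ :=
  ⨆ u : U, ((∑ i, p i * b t γ u i)
    + (1/2) * Matrix.trace (l * (σ' t γ u * (σ' t γ u).transpose))
    + q t γ r (toEuc ((σ' t γ u).transpose.mulVec (fun i => p i))) u)

/-- Hypothesis 2.1 on the coefficients, with Lipschitz/growth constant `L`. -/
structure Hyp (T : ℝ) {d n : ℕ} (U : Type*) [MetricSpace U] (L : ℝ)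
    (b : ℝ → (ℝ → E d) → U → E d)
    (σ' : ℝ → (ℝ → E d) → U → Matrix (Fin d) (Fin n) ℝ)
    (q : ℝ → (ℝ → E d) → ℝ → E n → U → ℝ)
    (φ : (ℝ → E d) → ℝ) : Prop where
  hL : 0 < L
  cont_b : ∀ t γ u, Mem T 0 t γ → ∀ ε > 0, ∃ δ > 0, ∀ s η v, Mem T 0 s η →
    dInfty t γ s η + dist u v < δ → ‖b s η v - b t γ u‖ < ε
  cont_σ : ∀ t γ u, Mem T 0 t γ → ∀ ε > 0, ∃ δ > 0, ∀ s η v, Mem T 0 s η →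
    dInfty t γ s η + dist u v < δ → frob (σ' s η v - σ' t γ u) < ε
  cont_q : ∀ t γ (y : ℝ) (z : E n) u, Mem T 0 t γ → ∀ ε > 0, ∃ δ > 0,
    ∀ s η (y' : ℝ) (z' : E n) v, Mem T 0 s η →
      dInfty t γ s η + |y' - y| + ‖z' - z‖ + dist u v < δ →
      |q s η y' z' v - q t γ y z u| < ε
  cont_φ : ∀ γ, IsContOn T γ → ∀ ε > 0, ∃ δ > 0, ∀ η, IsContOn T η →
    pairDist T γ T η < δ → |φ η - φ γ| < ε
  bound_b : ∀ t γ u, Mem T 0 t γ → ‖b t γ u‖ ^ 2 ≤ L ^ 2 * (1 + supNorm t γ ^ 2)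
  bound_σ : ∀ t γ u, Mem T 0 t γ → frob (σ' t γ u) ^ 2 ≤ L ^ 2 * (1 + supNorm t γ ^ 2)
  lip_b : ∀ t γ γ' u, Mem T 0 t γ → Mem T 0 t γ' →
    ‖b t γ u - b t γ' u‖ ≤ L * pairDist t γ t γ'
  lip_σ : ∀ t γ γ' u, Mem T 0 t γ → Mem T 0 t γ' →
    frob (σ' t γ u - σ' t γ' u) ≤ L * pairDist t γ t γ'
  bound_q : ∀ t γ y z u, Mem T 0 t γ → |q t γ y z u| ≤ L * (1 + supNorm t γ + |y| + ‖z‖)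
  lip_q : ∀ t γ γ' y y' z z' u, Mem T 0 t γ → Mem T 0 t γ' →
    |q t γ y z u - q t γ' y' z' u| ≤ L * (pairDist t γ t γ' + |y - y'| + ‖z - z'‖)
  lip_φ : ∀ γ η, IsContOn T γ → IsContOn T η → |φ γ - φ η| ≤ L * pairDist T γ T η

/-- `Φ ∈ A⁺(γ_t, w)`: `0 = (w - Φ)(γ_t) = sup_{[t,T]×Λ} (w - Φ)`. -/
def InAplus (T t : ℝ) (w : ℝ → (ℝ → E d) → ℝ) (γ : ℝ → E d) (Φ : C12pHat d T t) : Prop :=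
  w t γ - Φ.F t γ = 0 ∧ ∀ s η, Mem T t s η → w s η - Φ.F s η ≤ 0

/-- `Φ ∈ A⁻(γ_t, w)`: `0 = (w + Φ)(γ_t) = inf_{[t,T]×Λ} (w + Φ)`. -/
def InAminus (T t : ℝ) (w : ℝ → (ℝ → E d) → ℝ) (γ : ℝ → E d) (Φ : C12pHat d T t) : Prop :=
  w t γ + Φ.F t γ = 0 ∧ ∀ s η, Mem T t s η → 0 ≤ w s η + Φ.F s η

/-- Viscosity subsolution of the PHJB equation. -/
def IsViscSubsol (T : ℝ) (U : Type*)
    (b : ℝ → (ℝ → E d) → U → E d)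
    (σ' : ℝ → (ℝ → E d) → U → Matrix (Fin d) (Fin n) ℝ)
    (q : ℝ → (ℝ → E d) → ℝ → E n → U → ℝ)
    (φ : (ℝ → E d) → ℝ)
    (w : ℝ → (ℝ → E d) → ℝ) : Prop :=
  (∀ γ, IsContOn T γ → w T γ ≤ φ γ) ∧
  ∀ t γ, Mem T 0 t γ → t < T → ∀ Φ : C12pHat d T t,
    InAplus T t w γ Φ →
    0 ≤ Φ.Ft t γ + hamiltonian U b σ' q t γ (Φ.F t γ) (Φ.Fx t γ) (Φ.Fxx t γ)

/-- Viscosity supersolution of the PHJB equation. -/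
def IsViscSupersol (T : ℝ) (U : Type*)
    (b : ℝ → (ℝ → E d) → U → E d)
    (σ' : ℝ → (ℝ → E d) → U → Matrix (Fin d) (Fin n) ℝ)
    (q : ℝ → (ℝ → E d) → ℝ → E n → U → ℝ)
    (φ : (ℝ → E d) → ℝ)
    (w : ℝ → (ℝ → E d) → ℝ) : Prop :=
  (∀ γ, IsContOn T γ → φ γ ≤ w T γ) ∧
  ∀ t γ, Mem T 0 t γ → t < T → ∀ Φ : C12pHat d T t,
    InAminus T t w γ Φ →
    -Φ.Ft t γ + hamiltonian U b σ' q t γ (-(Φ.F t γ)) (-(Φ.Fx t γ)) (-(Φ.Fxx t γ)) ≤ 0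

/-- Gauge-type function on `Λ^{tBase}`. -/
def IsGaugeType (T tBase : ℝ) (ρ : ℝ → (ℝ → E d) → ℝ → (ℝ → E d) → ℝ) : Prop :=
  (∀ t γ s η, Mem T tBase t γ → Mem T tBase s η → 0 ≤ ρ t γ s η) ∧
  (∀ t γ s η, Mem T tBase t γ → Mem T tBase s η → ∀ ε > 0, ∃ δ > 0,
    ∀ t' γ' s' η', Mem T tBase t' γ' → Mem T tBase s' η' →
      dInfty t γ t' γ' + dInfty s η s' η' < δ →
      |ρ t' γ' s' η' - ρ t γ s η| < ε) ∧
  (∀ s γ, Mem T tBase s γ → ρ s γ s γ = 0) ∧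
  (∀ ε > 0, ∃ δ > 0, ∀ s γ l η, Mem T tBase s γ → Mem T tBase l η →
    ρ s γ l η ≤ δ → dInfty s γ l η < ε)

/-- Upper semicontinuity (w.r.t. `d_∞`) of a path functional. -/
def PathUSC (T tBase : ℝ) (w : ℝ → (ℝ → E d) → ℝ) : Prop :=
  ∀ t γ, Mem T tBase t γ → ∀ c, w t γ < c → ∃ δ > 0, ∀ s η, Mem T tBase s η →
    dInfty t γ s η < δ → w s η < c

/-- Bounded from above. -/
def BddAbovePath (T tBase : ℝ) (w : ℝ → (ℝ → E d) → ℝ) : Prop :=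
  ∃ B, ∀ t γ, Mem T tBase t γ → w t γ ≤ B

/-- `limsup_{‖γ_t‖₀ → ∞} w(γ_t)/‖γ_t‖₀ < 0`. -/
def NegAtInfty (T : ℝ) (w : ℝ → (ℝ → E d) → ℝ) : Prop :=
  ∃ c > 0, ∃ R : ℝ, ∀ t γ, Mem T 0 t γ → R ≤ supNorm t γ → w t γ ≤ -c * supNorm t γ

/-- The function `w̃^{t̂}` of Definition 5.4. -/
def tilde (T tBase : ℝ) (w : ℝ → (ℝ → E d) → ℝ) : ℝ → E d → ℝ := fun t x =>
  if tBase ≤ t then sSup {r | ∃ ξ, Mem T tBase t ξ ∧ ξ t = x ∧ r = w t ξ}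
  else sSup {r | ∃ ξ, Mem T tBase tBase ξ ∧ ξ tBase = x ∧ r = w tBase ξ} - Real.sqrt (tBase - t)

/-- Upper semicontinuous envelope (on `[0,T] × ℝ^d`). -/
def uscEnv (T : ℝ) (g : ℝ → E d → ℝ) : ℝ → E d → ℝ := fun t x =>
  Filter.limsup (fun p : ℝ × E d => g p.1 p.2)
    (nhdsWithin (t, x) ((Icc (0:ℝ) T) ×ˢ (univ : Set (E d))))

/-- A local modulus of continuity. -/
def IsLocalModulus (ρ₁ : ℝ → ℝ → ℝ) : Prop :=
  Continuous (Function.uncurry ρ₁) ∧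
  (∀ r, 0 ≤ r → ρ₁ 0 r = 0) ∧
  (∀ a r, 0 ≤ a → 0 ≤ r → 0 ≤ ρ₁ a r) ∧
  (∀ a b r, 0 ≤ a → 0 ≤ b → 0 ≤ r → ρ₁ (a + b) r ≤ ρ₁ a r + ρ₁ b r) ∧
  (∀ a r r', 0 ≤ a → 0 ≤ r → r ≤ r' → ρ₁ a r ≤ ρ₁ a r')

/-- `(g, gt, gx, gxx)` is a `C^{1,2}` function on `[0,T] × ℝ^d` together with its
time derivative, spatial gradient and spatial Hessian. -/
def IsC12On (T : ℝ) (g gt : ℝ → E d → ℝ) (gx : ℝ → E d → E d)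
    (gxx : ℝ → E d → Matrix (Fin d) (Fin d) ℝ) : Prop :=
  Continuous (fun p : ℝ × E d => g p.1 p.2) ∧
  Continuous (fun p : ℝ × E d => gt p.1 p.2) ∧
  Continuous (fun p : ℝ × E d => gx p.1 p.2) ∧
  Continuous (fun p : ℝ × E d => gxx p.1 p.2) ∧
  (∀ t x, HasDerivAt (fun s => g s x) (gt t x) t) ∧
  (∀ t x (i : Fin d), HasDerivAt (fun h : ℝ => g t (x + h • basis d i)) (gx t x i) 0) ∧
  (∀ t x (i j : Fin d),
    HasDerivAt (fun h : ℝ => gx t (x + h • basis d j) i) (gxx t x j i) 0)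

/-- The class `Φ(t̂, x̂)` of Definition 5.3. -/
def InPhiClass (T : ℝ) (that : ℝ) (xhat : E d) (f : ℝ → E d → ℝ) : Prop :=
  ∃ r > 0, ∀ L > 0, ∀ g gt gx gxx, IsC12On T g gt gx gxx →
    ∃ C > 0, ∀ t x, 0 < t → t < T →
      (∀ s y, 0 ≤ s → s ≤ T → f s y - g s y ≤ f t x - g t x) →
      (|t - that| + ‖x - xhat‖ < r ∧ |f t x| + ‖gx t x‖ + frob (gxx t x) ≤ L) →
      C ≤ gt t x

/-- Bounded and uniformly continuous path functional on `Λ̂^{tBase}`. -/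
def UCBoundedHat (T tBase : ℝ) (f : ℝ → (ℝ → E d) → ℝ) : Prop :=
  (∃ B, ∀ t γ, MemHat T tBase t γ → |f t γ| ≤ B) ∧
  ∀ ε > 0, ∃ δ > 0, ∀ t γ s η, MemHat T tBase t γ → MemHat T tBase s η →
    dInfty t γ s η < δ → |f t γ - f s η| < ε

/-- Basis of ℝ^d × ℝ^d indexed by `Fin d ⊕ Fin d`. -/
def basisProd (d : ℕ) (v : Fin d ⊕ Fin d) : E d × E d :=
  Sum.elim (fun i => (basis d i, 0)) (fun j => (0, basis d j)) v

/-- The full Hessian `∇²φ` of `φ : ℝ^d × ℝ^d → ℝ` as a `(2d) × (2d)` matrix. -/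
def hess2 (φ : E d × E d → ℝ) (p : E d × E d) :
    Matrix (Fin d ⊕ Fin d) (Fin d ⊕ Fin d) ℝ :=
  Matrix.of fun v w => fderiv ℝ (fun x => fderiv ℝ φ x (basisProd d w)) p (basisProd d v)

/-- `∇_{x₁}φ`. -/
def grad1 (φ : E d × E d → ℝ) (p : E d × E d) : E d :=
  toEuc (fun i => fderiv ℝ φ p (basisProd d (Sum.inl i)))

/-- `∇_{x₂}φ`. -/
def grad2 (φ : E d × E d → ℝ) (p : E d × E d) : E d :=
  toEuc (fun i => fderiv ℝ φ p (basisProd d (Sum.inr i)))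

/-- Operator norm of a matrix, acting on Euclidean space. -/
def matOpNorm {ι : Type*} [Fintype ι] [DecidableEq ι] (A : Matrix ι ι ℝ) : ℝ :=
  ‖LinearMap.toContinuousLinearMap (Matrix.toEuclideanLin A)‖

/-- Matrix order `A ≤ B` in the sense of quadratic forms. -/
def matLE {ι : Type*} [Fintype ι] (A B : Matrix ι ι ℝ) : Prop :=
  (B - A).PosSemidef


/-- The state-dependent Hamiltonian `H̄(t,x,r,p,l)`. -/
def hamBar (U : Type*) {d n : ℕ} (bbar : ℝ → E d → U → E d)
    (σbar : ℝ → E d → U → Matrix (Fin d) (Fin n) ℝ)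
    (qbar : ℝ → E d → ℝ → E n → U → ℝ)
    (t : ℝ) (x : E d) (r : ℝ) (p : E d) (l : Matrix (Fin d) (Fin d) ℝ) : ℝ :=
  ⨆ u : U, ((∑ i, p i * bbar t x u i)
    + (1/2) * Matrix.trace (l * (σbar t x u * (σbar t x u).transpose))
    + qbar t x r (toEuc ((σbar t x u).transpose.mulVec (fun i => p i))) u)

/-! ### Auxiliary lemmas for Statement 7 -/

lemma pairDist_nonneg' (t : ℝ) (γ : ℝ → E d) (s : ℝ) (η : ℝ → E d) :
    0 ≤ pairDist t γ s η :=
  Real.sSup_nonneg (by rintro x ⟨l, -, rfl⟩; exact norm_nonneg _)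

lemma le_pairDist' {t s : ℝ} {γ η : ℝ → E d}
    (hB : BddAbove ((fun l => ‖γ (min l t) - η (min l s)‖) '' Icc 0 (max t s)))
    (hts : 0 ≤ max t s) {l : ℝ} (hl : 0 ≤ l) :
    ‖γ (min l t) - η (min l s)‖ ≤ pairDist t γ s η := by
  have h1 : min (min l (max t s)) t = min l t := by
    rw [min_assoc, min_eq_right (le_max_left t s)]
  have h2 : min (min l (max t s)) s = min l s := by
    rw [min_assoc, min_eq_right (le_max_right t s)]
  have hmem : min l (max t s) ∈ Icc (0:ℝ) (max t s) := ⟨le_min hl hts, min_le_right _ _⟩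
  have := le_csSup hB ⟨min l (max t s), hmem, rfl⟩
  simpa only [pairDist, h1, h2] using this

lemma endpoint_le_pairDist' {t s : ℝ} {γ η : ℝ → E d}
    (hB : BddAbove ((fun l => ‖γ (min l t) - η (min l s)‖) '' Icc 0 (max t s)))
    (hts : 0 ≤ max t s) :
    ‖γ t - η s‖ ≤ pairDist t γ s η := by
  have := le_pairDist' hB hts (l := max t s) hts
  rwa [min_eq_right (le_max_left t s), min_eq_right (le_max_right t s)] at this

lemma bddAbove_pairDistSet' {t s : ℝ} {γ η : ℝ → E d} (ht : 0 ≤ t) (hs : 0 ≤ s)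
    (hγ : IsContOn t γ) (hη : IsContOn s η) :
    BddAbove ((fun l => ‖γ (min l t) - η (min l s)‖) '' Icc 0 (max t s)) := by
  apply IsCompact.bddAbove_image isCompact_Icc
  apply ContinuousOn.norm
  apply ContinuousOn.sub
  · exact hγ.comp ((continuous_id.min continuous_const).continuousOn)
      (fun l hl => ⟨le_min hl.1 ht, min_le_right _ _⟩)
  · exact hη.comp ((continuous_id.min continuous_const).continuousOn)
      (fun l hl => ⟨le_min hl.1 hs, min_le_right _ _⟩)

lemma pairDist_self' (t : ℝ) (γ : ℝ → E d) : pairDist t γ t γ = 0 := by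
  unfold pairDist
  have hsub : ((fun l => ‖γ (min l t) - γ (min l t)‖) '' Icc 0 (max t t)) ⊆ {0} := by
    rintro x ⟨l, -, rfl⟩; simp
  rcases Set.subset_singleton_iff_eq.mp hsub with h | h
  · rw [h, Real.sSup_empty]
  · rw [h, csSup_singleton]

lemma pairDist_comm' (t s : ℝ) (γ η : ℝ → E d) : pairDist t γ s η = pairDist s η t γ := by
  unfold pairDist
  have hfe : (fun l => ‖γ (min l t) - η (min l s)‖) = fun l => ‖η (min l s) - γ (min l t)‖ :=
    funext fun l => norm_sub_rev _ _
  rw [hfe, max_comm]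

lemma pairDist_triangle' {t s t' s' : ℝ} {γ η γ' η' : ℝ → E d}
    (hts : 0 ≤ max t s)
    (hB1 : BddAbove ((fun l => ‖γ (min l t) - γ' (min l t')‖) '' Icc 0 (max t t')))
    (hB2 : BddAbove ((fun l => ‖γ' (min l t') - η' (min l s')‖) '' Icc 0 (max t' s')))
    (hB3 : BddAbove ((fun l => ‖η' (min l s') - η (min l s)‖) '' Icc 0 (max s' s)))
    (h1 : 0 ≤ max t t') (h2 : 0 ≤ max t' s') (h3 : 0 ≤ max s' s) :
    pairDist t γ s η ≤ pairDist t γ t' γ' + pairDist t' γ' s' η' + pairDist s' η' s η := by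
  apply Real.sSup_le
  · rintro x ⟨l, hl, rfl⟩
    calc ‖γ (min l t) - η (min l s)‖
        ≤ ‖γ (min l t) - γ' (min l t')‖ + ‖γ' (min l t') - η' (min l s')‖
            + ‖η' (min l s') - η (min l s)‖ := by
          have := dist_triangle4 (γ (min l t)) (γ' (min l t')) (η' (min l s')) (η (min l s))
          simpa [dist_eq_norm] using this
      _ ≤ pairDist t γ t' γ' + pairDist t' γ' s' η' + pairDist s' η' s η :=
          add_le_add (add_le_add (le_pairDist' hB1 h1 hl.1) (le_pairDist' hB2 h2 hl.1))
            (le_pairDist' hB3 h3 hl.1)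
  · have := pairDist_nonneg' t γ t' γ'
    have := pairDist_nonneg' t' γ' s' η'
    have := pairDist_nonneg' s' η' s η
    linarith

lemma isCadlagOn_of_isContOn' {t : ℝ} {γ : ℝ → E d} (hc : IsContOn t γ) :
    IsCadlagOn t γ := by
  constructor
  · intro u hu
    have h1 : ContinuousWithinAt γ (Icc 0 t) u := hc u ⟨hu.1, hu.2.le⟩
    have h2 : ContinuousWithinAt γ (Ici u ∩ Iio t) u :=
      h1.mono (fun x hx => ⟨le_trans hu.1 hx.1, hx.2.le⟩)
    exact (continuousWithinAt_inter (Iio_mem_nhds hu.2)).mp h2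
  · intro u hu
    refine ⟨γ u, ?_⟩
    have h1 : ContinuousWithinAt γ (Icc 0 t) u := hc u ⟨hu.1.le, hu.2⟩
    have h2 : ContinuousWithinAt γ (Iio u ∩ Ioi 0) u :=
      h1.mono (fun x hx => ⟨hx.2.le, le_trans hx.1.le hu.2⟩)
    exact (continuousWithinAt_inter (Ioi_mem_nhds hu.1)).mp h2

lemma mem_toMemHat' {T tb t : ℝ} {γ : ℝ → E d} (htb : 0 ≤ tb) (h : Mem T tb t γ) :
    MemHat T 0 t γ :=
  ⟨le_trans htb h.1, h.2.1, isCadlagOn_of_isContOn' h.2.2⟩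

/-- The scalar function `(D,a) ↦ S` behind `Sm`. -/
def hfun : ℝ × ℝ → ℝ := fun p => if p.1 = 0 then 0 else (p.1 ^ 6 - p.2 ^ 6) ^ 3 / p.1 ^ 12

/-- `UpsBar 3 3` as a function of `(D, a, t, s)`. -/
def psiFun : (ℝ × ℝ) × ℝ × ℝ → ℝ :=
  fun p => hfun p.1 + 3 * p.1.2 ^ 6 + (p.2.2 - p.2.1) ^ 2

lemma upsBar_eq_psi (t s : ℝ) (γ η : ℝ → E d) :
    UpsBar 3 3 t γ s η = psiFun ((pairDist t γ s η, ‖γ t - η s‖), (t, s)) := by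
  simp only [UpsBar, Ups, Sm, psiFun, hfun]

lemma contOn_hfun : ContinuousOn hfun {p : ℝ × ℝ | 0 ≤ p.2 ∧ p.2 ≤ p.1} := by
  intro p hp
  rcases eq_or_ne p.1 0 with h0 | h0
  · have hval : hfun p = 0 := by simp [hfun, h0]
    rw [ContinuousWithinAt, hval]
    have hub : Tendsto (fun q : ℝ × ℝ => q.1 ^ 6)
        (nhdsWithin p {p : ℝ × ℝ | 0 ≤ p.2 ∧ p.2 ≤ p.1}) (nhds 0) := by
      have h1 : Tendsto (fun q : ℝ × ℝ => q.1 ^ 6) (nhds p) (nhds (p.1 ^ 6)) :=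
        ((continuous_fst.pow 6)).tendsto p
      rw [h0] at h1
      simpa using h1.mono_left nhdsWithin_le_nhds
    apply tendsto_of_tendsto_of_tendsto_of_le_of_le' tendsto_const_nhds hub
    · filter_upwards [self_mem_nhdsWithin] with q hq
      by_cases hq1 : q.1 = 0
      · simp [hfun, hq1]
      · have h6 : q.2 ^ 6 ≤ q.1 ^ 6 := pow_le_pow_left₀ hq.1 hq.2 6
        simp only [hfun, if_neg hq1]
        exact div_nonneg (pow_nonneg (sub_nonneg.2 h6) 3) (by positivity)
    · filter_upwards [self_mem_nhdsWithin] with q hq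
      by_cases hq1 : q.1 = 0
      · simp only [hfun, if_pos hq1]
        positivity
      · have h1pos : 0 < q.1 := lt_of_le_of_ne (le_trans hq.1 hq.2) (Ne.symm hq1)
        have h6 : q.2 ^ 6 ≤ q.1 ^ 6 := pow_le_pow_left₀ hq.1 hq.2 6
        simp only [hfun, if_neg hq1]
        rw [div_le_iff₀ (by positivity)]
        calc (q.1 ^ 6 - q.2 ^ 6) ^ 3 ≤ (q.1 ^ 6) ^ 3 := by
              apply pow_le_pow_left₀ (sub_nonneg.2 h6)
              have : 0 ≤ q.2 ^ 6 := by positivity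
              linarith
          _ = q.1 ^ 6 * q.1 ^ 12 := by ring
  · have hcont : ContinuousAt (fun q : ℝ × ℝ => (q.1 ^ 6 - q.2 ^ 6) ^ 3 / q.1 ^ 12) p := by
      apply ContinuousAt.div
      · fun_prop
      · fun_prop
      · exact pow_ne_zero _ h0
    have hev : (fun q : ℝ × ℝ => (q.1 ^ 6 - q.2 ^ 6) ^ 3 / q.1 ^ 12) =ᶠ[nhds p] hfun := by
      have hopen : IsOpen {q : ℝ × ℝ | q.1 ≠ 0} := isOpen_ne_fun continuous_fst continuous_const
      filter_upwards [hopen.mem_nhds h0] with q hq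
      simp [hfun, hq]
    exact (hcont.congr hev).continuousWithinAt

lemma contOn_psi : ContinuousOn psiFun
    {p : (ℝ × ℝ) × ℝ × ℝ | 0 ≤ p.1.2 ∧ p.1.2 ≤ p.1.1} := by
  apply ContinuousOn.add
  apply ContinuousOn.add
  · exact contOn_hfun.comp continuous_fst.continuousOn (fun p hp => hp)
  · exact (Continuous.continuousOn (by fun_prop))
  · exact (Continuous.continuousOn (by fun_prop))

lemma upsBar_lower_bound {T : ℝ} :
    ∀ t γ s η, MemHat T 0 t γ → MemHat T 0 s (η : ℝ → E d) →
      pairDist t γ s η ^ 6 + (s - t) ^ 2 ≤ UpsBar 3 3 t γ s η := by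
  intro t γ s η hγ hη
  rw [upsBar_eq_psi]
  set D := pairDist t γ s η with hD
  set a := ‖γ t - η s‖ with ha
  simp only [psiFun, hfun]
  by_cases h0 : D = 0
  · rw [if_pos h0, h0]
    have : (0:ℝ) ≤ 3 * a ^ 6 := by positivity
    nlinarith
  · rw [if_neg h0]
    have hBdd : BddAbove ((fun l => ‖γ (min l t) - η (min l s)‖) '' Icc 0 (max t s)) := by
      by_contra hB
      exact h0 (Real.sSup_of_not_bddAbove hB)
    have haD : a ≤ D := endpoint_le_pairDist' hBdd (le_max_of_le_left hγ.1)
    have ha0 : 0 ≤ a := norm_nonneg _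
    have hD0 : 0 < D := lt_of_le_of_ne (le_trans ha0 haD) (Ne.symm h0)
    have h6 : a ^ 6 ≤ D ^ 6 := pow_le_pow_left₀ ha0 haD 6
    have key : D ^ 6 * D ^ 12 ≤ (D ^ 6 - a ^ 6) ^ 3 + 3 * a ^ 6 * D ^ 12 := by
      have hident : (D ^ 6 - a ^ 6) ^ 3 + 3 * a ^ 6 * D ^ 12 - D ^ 6 * D ^ 12
          = a ^ 6 * a ^ 6 * (3 * D ^ 6 - a ^ 6) := by ring
      have hpos : 0 ≤ a ^ 6 * a ^ 6 * (3 * D ^ 6 - a ^ 6) := by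
        apply mul_nonneg (by positivity)
        have : 0 ≤ D ^ 6 := by positivity
        linarith
      linarith [hident ▸ hpos]
    have h12 : (0:ℝ) < D ^ 12 := by positivity
    have hmain : D ^ 6 ≤ (D ^ 6 - a ^ 6) ^ 3 / D ^ 12 + 3 * a ^ 6 := by
      rw [← sub_nonneg]
      have : (D ^ 6 - a ^ 6) ^ 3 / D ^ 12 + 3 * a ^ 6 - D ^ 6
          = ((D ^ 6 - a ^ 6) ^ 3 + 3 * a ^ 6 * D ^ 12 - D ^ 6 * D ^ 12) / D ^ 12 := by
        field_simp
      rw [this]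
      apply div_nonneg _ h12.le
      linarith
    linarith

/-- `Ῡ(γ_t,η_s) ≥ ‖γ_t - η_s‖₀⁶ + |s-t|²`; consequently `Ῡ` is a
gauge-type function on every `Λ^t`. -/
theorem upsBar_dominates_and_is_gauge_type
    {d : ℕ} (T : ℝ) (hT : 0 < T) :
    (∀ t γ s η, MemHat T 0 t γ → MemHat T 0 s (η : ℝ → E d) →
      pairDist t γ s η ^ 6 + (s - t) ^ 2 ≤ UpsBar 3 3 t γ s η) ∧
    (∀ tb, 0 ≤ tb → tb ≤ T →
      IsGaugeType T tb (fun t (γ : ℝ → E d) s η => UpsBar 3 3 t γ s η)) := by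
  refine ⟨upsBar_lower_bound, ?_⟩
  intro tb htb htbT
  have hMem : ∀ {t : ℝ} {γ : ℝ → E d}, Mem T tb t γ → MemHat T 0 t γ :=
    fun h => mem_toMemHat' htb h
  have ht0 : ∀ {t : ℝ} {γ : ℝ → E d}, Mem T tb t γ → 0 ≤ t :=
    fun h => le_trans htb h.1
  -- endpoint distance is bounded by pairDist, for continuous paths
  have hendpt : ∀ {t s : ℝ} {γ η : ℝ → E d}, Mem T tb t γ → Mem T tb s η →
      ‖γ t - η s‖ ≤ pairDist t γ s η := by
    intro t s γ η h1 h2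
    exact endpoint_le_pairDist'
      (bddAbove_pairDistSet' (ht0 h1) (ht0 h2) h1.2.2 h2.2.2)
      (le_max_of_le_left (ht0 h1))
  refine ⟨?_, ?_, ?_, ?_⟩
  · -- nonnegativity
    intro t γ s η h1 h2
    have := upsBar_lower_bound t γ s η (hMem h1) (hMem h2)
    have h6 : (0:ℝ) ≤ pairDist t γ s η ^ 6 + (s - t) ^ 2 := by positivity
    linarith
  · -- continuity
    intro t γ s η h1 h2 ε hε
    set D := pairDist t γ s η with hDdef
    set a := ‖γ t - η s‖ with hadef
    have hp0mem : ((D, a), (t, s)) ∈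
        {p : (ℝ × ℝ) × ℝ × ℝ | 0 ≤ p.1.2 ∧ p.1.2 ≤ p.1.1} :=
      ⟨norm_nonneg _, hendpt h1 h2⟩
    obtain ⟨δ, hδ, hδprop⟩ := Metric.continuousWithinAt_iff.mp (contOn_psi _ hp0mem) ε hε
    refine ⟨δ, hδ, ?_⟩
    intro t' γ' s' η' h1' h2' hd
    set D' := pairDist t' γ' s' η' with hD'def
    set a' := ‖γ' t' - η' s'‖ with ha'def
    set A := dInfty t γ t' γ' with hAdef
    set B := dInfty s η s' η' with hBdef
    have hpd1 : pairDist t γ t' γ' ≤ A := by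
      rw [hAdef, dInfty]; have := abs_nonneg (t - t'); linarith
    have hpd2 : pairDist s η s' η' ≤ B := by
      rw [hBdef, dInfty]; have := abs_nonneg (s - s'); linarith
    have hpd1n : 0 ≤ pairDist t γ t' γ' := pairDist_nonneg' _ _ _ _
    have hpd2n : 0 ≤ pairDist s η s' η' := pairDist_nonneg' _ _ _ _
    have hAn : 0 ≤ A := le_trans hpd1n hpd1
    have hBn : 0 ≤ B := le_trans hpd2n hpd2
    have htt' : |t' - t| ≤ A := by
      rw [hAdef, dInfty, abs_sub_comm]; linarith
    have hss' : |s' - s| ≤ B := by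
      rw [hBdef, dInfty, abs_sub_comm]; linarith
    -- BddAbove facts
    have hBa : ∀ {u v : ℝ} {ξ ζ : ℝ → E d}, Mem T tb u ξ → Mem T tb v ζ →
        BddAbove ((fun l => ‖ξ (min l u) - ζ (min l v)‖) '' Icc 0 (max u v)) :=
      fun hu hv => bddAbove_pairDistSet' (ht0 hu) (ht0 hv) hu.2.2 hv.2.2
    have htri1 : D' ≤ pairDist t γ t' γ' + D + pairDist s η s' η' := by
      have := pairDist_triangle' (t := t') (s := s') (t' := t) (s' := s)
        (γ := γ') (η := η') (γ' := γ) (η' := η)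
        (le_max_of_le_left (ht0 h1')) (hBa h1' h1) (hBa h1 h2) (hBa h2 h2')
        (le_max_of_le_left (ht0 h1')) (le_max_of_le_left (ht0 h1))
        (le_max_of_le_left (ht0 h2))
      rw [pairDist_comm' t' t γ' γ] at this
      rw [hD'def, hDdef]
      exact this
    have htri2 : D ≤ pairDist t γ t' γ' + D' + pairDist s η s' η' := by
      rw [hDdef, hD'def]
      have h := pairDist_triangle' (t := t) (s := s) (t' := t') (s' := s')
        (γ := γ) (η := η) (γ' := γ') (η' := η')
        (le_max_of_le_left (ht0 h1)) (hBa h1 h1') (hBa h1' h2') (hBa h2' h2)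
        (le_max_of_le_left (ht0 h1)) (le_max_of_le_left (ht0 h1'))
        (le_max_of_le_left (ht0 h2'))
      rw [pairDist_comm' s' s η' η] at h
      exact h
    have hDD' : |D' - D| ≤ A + B := by
      rw [abs_sub_le_iff]
      constructor <;> linarith
    have haa' : |a' - a| ≤ A + B := by
      have e1 : ‖γ t - γ' t'‖ ≤ pairDist t γ t' γ' := hendpt h1 h1'
      have e2 : ‖η s - η' s'‖ ≤ pairDist s η s' η' := hendpt h2 h2'
      have h3 : |a' - a| ≤ ‖(γ' t' - η' s') - (γ t - η s)‖ :=
        abs_norm_sub_norm_le _ _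
      have h4 : (γ' t' - η' s') - (γ t - η s) = (γ' t' - γ t) - (η' s' - η s) := by abel
      have h5 : ‖(γ' t' - γ t) - (η' s' - η s)‖ ≤ ‖γ' t' - γ t‖ + ‖η' s' - η s‖ :=
        norm_sub_le _ _
      rw [norm_sub_rev (γ' t') (γ t), norm_sub_rev (η' s') (η s)] at h5
      calc |a' - a| ≤ ‖(γ' t' - γ t) - (η' s' - η s)‖ := h4 ▸ h3
        _ ≤ ‖γ t - γ' t'‖ + ‖η s - η' s'‖ := h5
        _ ≤ A + B := add_le_add (le_trans e1 hpd1) (le_trans e2 hpd2)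
    have hABδ : A + B < δ := hd
    have hdist : dist (((D', a'), (t', s')) : (ℝ × ℝ) × ℝ × ℝ) ((D, a), (t, s)) < δ := by
      rw [Prod.dist_eq, Prod.dist_eq, Prod.dist_eq]
      simp only [Real.dist_eq]
      apply max_lt <;> apply max_lt <;> linarith
    have hqmem : ((D', a'), (t', s')) ∈
        {p : (ℝ × ℝ) × ℝ × ℝ | 0 ≤ p.1.2 ∧ p.1.2 ≤ p.1.1} :=
      ⟨norm_nonneg _, hendpt h1' h2'⟩
    have := hδprop hqmem hdist
    rw [Real.dist_eq] at this
    show |UpsBar 3 3 t' γ' s' η' - UpsBar 3 3 t γ s η| < ε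
    rw [upsBar_eq_psi t' s' γ' η', upsBar_eq_psi t s γ η, ← hD'def, ← ha'def, ← hDdef,
      ← hadef]
    exact this
  · -- vanishing on the diagonal
    intro s γ _
    simp [UpsBar, Ups, Sm, pairDist_self']
  · -- gauge property
    intro ε hε
    refine ⟨min ((ε / 3) ^ 6) ((ε / 3) ^ 2), by positivity, ?_⟩
    intro s γ l η h1 h2 hρ
    have hlow := upsBar_lower_bound s γ l η (hMem h1) (hMem h2)
    set D := pairDist s γ l η with hDdef
    have hDn : 0 ≤ D := pairDist_nonneg' _ _ _ _
    have hsq : (l - s) ^ 2 ≥ 0 := sq_nonneg _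
    have hD6 : D ^ 6 ≤ (ε / 3) ^ 6 := by
      have := min_le_left ((ε / 3) ^ 6) ((ε / 3) ^ 2)
      nlinarith
    have hls2 : (l - s) ^ 2 ≤ (ε / 3) ^ 2 := by
      have := min_le_right ((ε / 3) ^ 6) ((ε / 3) ^ 2)
      have hD6n : 0 ≤ D ^ 6 := by positivity
      nlinarith
    have hDle : D ≤ ε / 3 := by
      by_contra hcon
      push_neg at hcon
      have : (ε / 3) ^ 6 < D ^ 6 := pow_lt_pow_left₀ hcon (by positivity) (by norm_num)
      linarith
    have hlsle : |s - l| ≤ ε / 3 := by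
      by_contra hcon
      push_neg at hcon
      have : (ε / 3) ^ 2 < |s - l| ^ 2 := pow_lt_pow_left₀ hcon (by positivity) (by norm_num)
      rw [sq_abs] at this
      nlinarith [sq_nonneg (s - l)]
    rw [dInfty]
    have : (s - l) ^ 2 = (l - s) ^ 2 := by ring
    linarith
end PHJB
end
end

section
/- Let M ≥ 3 be real and define f(x,y) = x − y³/x² + 3y²/x + (M−3)y for real x > 0 and 0 ≤ y ≤ x. If 0 < x ≤ x′, 0 ≤ y ≤ y′, y ≤ x and y′ ≤ x′, then f(x,y) ≤ f(x′,y′). -/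
set_option linter.unusedVariables false

noncomputable section

open Set Filter Topology

namespace PHJB

variable {d n : ℕ}

/-- monotonicity of `f(x,y) = x - y³/x² + 3y²/x + (M-3)y` in each
variable on the region `{x > 0, 0 ≤ y ≤ x}`. -/
theorem scalar_f_monotone
    (M : ℝ) (hM : 3 ≤ M) (x y x' y' : ℝ)
    (hx : 0 < x) (hy : 0 ≤ y) (hxx' : x ≤ x') (hyy' : y ≤ y')
    (hyx : y ≤ x) (hyx' : y' ≤ x') :
    x - y ^ 3 / x ^ 2 + 3 * y ^ 2 / x + (M - 3) * y ≤
      x' - y' ^ 3 / x' ^ 2 + 3 * y' ^ 2 / x' + (M - 3) * y' := by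
  have hx' : 0 < x' := lt_of_lt_of_le hx hxx'
  have hy' : 0 ≤ y' := le_trans hy hyy'
  have step1 : x - y ^ 3 / x ^ 2 + 3 * y ^ 2 / x + (M - 3) * y ≤
      x' - y ^ 3 / x' ^ 2 + 3 * y ^ 2 / x' + (M - 3) * y := by
    have h1 : x - y ^ 3 / x ^ 2 + 3 * y ^ 2 / x = (x ^ 3 - y ^ 3 + 3 * y ^ 2 * x) / x ^ 2 := by
      field_simp
    have h2 : x' - y ^ 3 / x' ^ 2 + 3 * y ^ 2 / x' = (x' ^ 3 - y ^ 3 + 3 * y ^ 2 * x') / x' ^ 2 := by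
      field_simp
    rw [h1, h2]
    have key : (x ^ 3 - y ^ 3 + 3 * y ^ 2 * x) * x' ^ 2 ≤ (x' ^ 3 - y ^ 3 + 3 * y ^ 2 * x') * x ^ 2 := by
      have hyx2 : y ≤ x' := hyx.trans hxx'
      nlinarith [mul_nonneg (sub_nonneg.2 hxx')
          (mul_nonneg (mul_nonneg (mul_nonneg hx.le hx'.le) (sub_nonneg.2 hyx)) (sub_nonneg.2 hyx2)),
        mul_nonneg (sub_nonneg.2 hxx')
          (mul_nonneg (mul_nonneg hy hx.le) (sq_nonneg (y - x'))),
        mul_nonneg (sub_nonneg.2 hxx')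
          (mul_nonneg (mul_nonneg hy hx'.le) (sq_nonneg (y - x)))]
    have hdiv : (x ^ 3 - y ^ 3 + 3 * y ^ 2 * x) / x ^ 2 ≤ (x' ^ 3 - y ^ 3 + 3 * y ^ 2 * x') / x' ^ 2 := by
      rw [div_le_div_iff₀ (pow_pos hx 2) (pow_pos hx' 2)]; exact key
    linarith
  have step2 : x' - y ^ 3 / x' ^ 2 + 3 * y ^ 2 / x' + (M - 3) * y ≤
      x' - y' ^ 3 / x' ^ 2 + 3 * y' ^ 2 / x' + (M - 3) * y' := by
    have key : (x' ^ 2 * x' - y ^ 3 + 3 * y ^ 2 * x' + (M - 3) * y * x' ^ 2) ≤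
        (x' ^ 2 * x' - y' ^ 3 + 3 * y' ^ 2 * x' + (M - 3) * y' * x' ^ 2) := by
      have hyx2 : y ≤ x' := hyy'.trans hyx'
      nlinarith [mul_nonneg (sub_nonneg.2 hyy') (mul_nonneg hy (sub_nonneg.2 hyx2)),
        mul_nonneg (sub_nonneg.2 hyy') (mul_nonneg hy' (sub_nonneg.2 hyx')),
        mul_nonneg (sub_nonneg.2 hyy') (mul_nonneg hy' (sub_nonneg.2 hyx2)),
        mul_nonneg (sub_nonneg.2 hyy') (mul_nonneg hy (sub_nonneg.2 hyx')),
        mul_nonneg (mul_nonneg (sub_nonneg.2 hyy') (sub_nonneg.2 hM)) (mul_nonneg hx'.le hx'.le)]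
    have expand : ∀ a b : ℝ, x' - a ^ 3 / x' ^ 2 + 3 * a ^ 2 / x' + (M - 3) * b =
        (x' ^ 2 * x' - a ^ 3 + 3 * a ^ 2 * x' + (M - 3) * b * x' ^ 2) / x' ^ 2 := by
      intro a b; field_simp
    rw [expand y y, expand y' y']
    exact div_le_div_of_nonneg_right key (pow_pos hx' 2).le |>.trans_eq rfl
  linarith
end PHJB
end
end

section
/- Let t̂ ∈ (0,T), let w_1, w_2 : Λ → ℝ be upper semicontinuous (for d_∞), bounded from above, with limsup_{‖γ_t‖_0 → ∞} w_i(γ_t)/‖γ_t‖_0 < 0 for i = 1,2, suppose there is a local modulus of continuity ρ_1 with w_i(γ_t) − w_i(γ_{t,s}) ≤ ρ_1(|s−t|, ‖γ_t‖_0) for all t̂ ≤ t ≤ s ≤ T, γ_t ∈ Λ, i = 1,2, and let φ ∈ C²(ℝ^d×ℝ^d) be such that w_1(γ_t) + w_2(η_t) − φ(γ_t(t), η_t(t)) attains a maximum over Λ^{t̂} ⊗ Λ^{t̂} at (γ̂_{t̂}, η̂_{t̂}). Then the function (t,x,y) ↦ w̃_1^{t̂,*}(t,x) + w̃_2^{t̂,*}(t,y)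 − φ(x,y) attains a maximum over [0,T]×ℝ^d×ℝ^d at (t̂, γ̂_{t̂}(t̂), η̂_{t̂}(t̂)); moreover w̃_1^{t̂,*}(t̂, γ̂_{t̂}(t̂)) = w_1(γ̂_{t̂}) and w̃_2^{t̂,*}(t̂, η̂_{t̂}(t̂)) = w_2(η̂_{t̂}). -/
set_option linter.unusedVariables false

noncomputable section

open Set Filter Topology

namespace PHJB

variable {d n : ℕ}

section Aux

variable {d : ℕ}

lemma mem_const' {T tBase s : ℝ} (h1 : tBase ≤ s) (h2 : s ≤ T) (x : E d) :
    Mem T tBase s (fun _ => x) := ⟨h1, h2, continuousOn_const⟩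

lemma mem_mono' {T tBase tBase' s : ℝ} (h : tBase' ≤ tBase) {γ : ℝ → E d}
    (hm : Mem T tBase s γ) : Mem T tBase' s γ := ⟨h.trans hm.1, hm.2.1, hm.2.2⟩

lemma supNorm_nonneg' (t : ℝ) (γ : ℝ → E d) : 0 ≤ supNorm t γ :=
  Real.sSup_nonneg (by rintro x ⟨l, _, rfl⟩; positivity)

lemma mem_hext' {T tBase u v : ℝ} {γ : ℝ → E d} (h0 : 0 ≤ u) (huv : u ≤ v)
    (hvT : v ≤ T) (hm : Mem T tBase u γ) : Mem T tBase v (hext u γ) := by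
  have h1 : ContinuousOn (γ ∘ (fun l : ℝ => min l u)) (Icc 0 v) :=
    hm.2.2.comp ((continuous_id.min continuous_const).continuousOn)
      (fun l hl => ⟨le_min hl.1 h0, min_le_right _ _⟩)
  exact ⟨hm.1.trans huv, hvT, h1⟩

lemma hext_endpoint' {u v : ℝ} (huv : u ≤ v) (γ : ℝ → E d) : hext u γ v = γ u := by
  simp [hext, min_eq_right huv]

lemma tilde_le' {T tBase : ℝ} {w : ℝ → (ℝ → E d) → ℝ} {B : ℝ}
    (h0 : 0 ≤ tBase) (hbT : tBase ≤ T)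
    (hB : ∀ t γ, Mem T 0 t γ → w t γ ≤ B)
    {s : ℝ} (hs : s ≤ T) (x : E d) : tilde T tBase w s x ≤ B := by
  have key : ∀ u, tBase ≤ u → u ≤ T →
      sSup {r | ∃ ξ, Mem T tBase u ξ ∧ ξ u = x ∧ r = w u ξ} ≤ B := by
    intro u h1 h2
    have hne : {r | ∃ ξ, Mem T tBase u ξ ∧ ξ u = x ∧ r = w u ξ}.Nonempty :=
      ⟨w u (fun _ => x), ⟨fun _ => x, mem_const' h1 h2 x, rfl, rfl⟩⟩
    apply csSup_le hne
    rintro r ⟨ξ, hξ, _, rfl⟩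
    exact hB _ _ (mem_mono' h0 hξ)
  unfold tilde
  split
  · exact key s ‹_› hs
  · have h3 := key tBase le_rfl hbT
    have h4 := Real.sqrt_nonneg (tBase - s)
    linarith

lemma tilde_le_max' {T tBase : ℝ} (w : ℝ → (ℝ → E d) → ℝ) (s : ℝ) (x : E d) :
    tilde T tBase w s x ≤ tilde T tBase w (max s tBase) x := by
  by_cases h : tBase ≤ s
  · rw [max_eq_left h]
  · rw [max_eq_right (le_of_not_ge h)]
    unfold tilde
    rw [if_neg h, if_pos le_rfl]
    have := Real.sqrt_nonneg (tBase - s)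
    linarith

lemma le_tilde' {T tBase : ℝ} {w : ℝ → (ℝ → E d) → ℝ} {B : ℝ}
    (h0 : 0 ≤ tBase)
    (hB : ∀ t γ, Mem T 0 t γ → w t γ ≤ B)
    {s : ℝ} {ξ : ℝ → E d} {x : E d} (h1 : tBase ≤ s) (hm : Mem T tBase s ξ)
    (hx : ξ s = x) : w s ξ ≤ tilde T tBase w s x := by
  unfold tilde
  rw [if_pos h1]
  apply le_csSup
  · refine ⟨B, ?_⟩
    rintro r ⟨ζ, hζ, _, rfl⟩
    exact hB _ _ (mem_mono' h0 hζ)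
  · exact ⟨ξ, hm, hx, rfl⟩

lemma exists_tilde' {T tBase : ℝ} {w : ℝ → (ℝ → E d) → ℝ}
    {s : ℝ} {x : E d} {r : ℝ} (h1 : tBase ≤ s) (h2 : s ≤ T)
    (hr : r < tilde T tBase w s x) :
    ∃ ξ, Mem T tBase s ξ ∧ ξ s = x ∧ r < w s ξ := by
  unfold tilde at hr
  rw [if_pos h1] at hr
  have hne : {r | ∃ ξ, Mem T tBase s ξ ∧ ξ s = x ∧ r = w s ξ}.Nonempty :=
    ⟨w s (fun _ => x), ⟨fun _ => x, mem_const' h1 h2 x, rfl, rfl⟩⟩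
  obtain ⟨b, ⟨ξ, hm, hx, rfl⟩, hb⟩ := exists_lt_of_lt_csSup hne hr
  exact ⟨ξ, hm, hx, hb⟩

lemma uscEnv_ge' {T : ℝ} {g : ℝ → E d → ℝ} {B : ℝ}
    (hB : ∀ s y, s ∈ Icc (0:ℝ) T → g s y ≤ B)
    {t : ℝ} {x : E d} (ht : t ∈ Icc (0:ℝ) T) : g t x ≤ uscEnv T g t x := by
  unfold uscEnv
  rw [Filter.limsup_eq]
  apply le_csInf
  · exact ⟨B, eventually_mem_nhdsWithin.mono (fun q hq => hB q.1 q.2 hq.1)⟩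
  · intro b hb
    exact hb.self_of_nhdsWithin ⟨ht, mem_univ x⟩

lemma uscEnv_frequently' {T : ℝ} {g : ℝ → E d → ℝ}
    {t : ℝ} {x : E d} (ht : t ∈ Icc (0:ℝ) T) {ε : ℝ} (hε : 0 < ε) :
    ∃ᶠ q in nhdsWithin (t, x) ((Icc (0:ℝ) T) ×ˢ (univ : Set (E d))),
      uscEnv T g t x - ε < g q.1 q.2 := by
  by_contra h
  rw [Filter.not_frequently] at h
  have key : uscEnv T g t x ≤ uscEnv T g t x - ε := by
    unfold uscEnv
    rw [Filter.limsup_eq]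
    apply csInf_le
    · refine ⟨g t x, ?_⟩
      intro a ha
      exact ha.self_of_nhdsWithin ⟨ht, mem_univ x⟩
    · exact h.mono (fun q hq => not_lt.1 hq)
  linarith

end Aux

/-- Lemma on the maximum of the upper semicontinuous envelopes
`w̃₁^{t̂,*}(t,x) + w̃₂^{t̂,*}(t,y) - φ(x,y)`. -/
theorem tilde_star_maximum
    {d : ℕ} (T : ℝ) (hT : 0 < T)
    (that : ℝ) (hthat0 : 0 < that) (hthatT : that < T)
    (w1 w2 : ℝ → (ℝ → E d) → ℝ)
    (husc1 : PathUSC T 0 w1) (husc2 : PathUSC T 0 w2)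
    (hbdd1 : BddAbovePath T 0 w1) (hbdd2 : BddAbovePath T 0 w2)
    (hneg1 : NegAtInfty T w1) (hneg2 : NegAtInfty T w2)
    (ρ₁ : ℝ → ℝ → ℝ) (hρ₁ : IsLocalModulus ρ₁)
    (hshift : ∀ t s γ, that ≤ t → t ≤ s → s ≤ T → Mem T 0 t γ →
      w1 t γ - w1 s (hext t γ) ≤ ρ₁ |s - t| (supNorm t γ) ∧
      w2 t γ - w2 s (hext t γ) ≤ ρ₁ |s - t| (supNorm t γ))
    (φ : E d × E d → ℝ) (hφ : ContDiff ℝ 2 φ)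
    (γhat ηhat : ℝ → E d) (hγ : Mem T that that γhat) (hη : Mem T that that ηhat)
    (hmax : ∀ s γ η, Mem T that s γ → Mem T that s η →
      w1 s γ + w2 s η - φ (γ s, η s) ≤
        w1 that γhat + w2 that ηhat - φ (γhat that, ηhat that)) :
    (∀ t x y, 0 ≤ t → t ≤ T →
      uscEnv T (tilde T that w1) t x + uscEnv T (tilde T that w2) t y - φ (x, y) ≤
        uscEnv T (tilde T that w1) that (γhat that)
          + uscEnv T (tilde T that w2) that (ηhat that)
          - φ (γhat that, ηhat that)) ∧
    uscEnv T (tilde T that w1) that (γhat that) = w1 that γhat ∧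
    uscEnv T (tilde T that w2) that (ηhat that) = w2 that ηhat := by
  obtain ⟨B1, hB1⟩ := hbdd1
  obtain ⟨B2, hB2⟩ := hbdd2
  obtain ⟨c1, hc1, R1, hR1⟩ := hneg1
  obtain ⟨c2, hc2, R2, hR2⟩ := hneg2
  have h0that : (0:ℝ) ≤ that := hthat0.le
  have hthatT' : that ≤ T := hthatT.le
  have hb1 : ∀ s y, s ∈ Icc (0:ℝ) T → tilde T that w1 s y ≤ B1 :=
    fun s y hs => tilde_le' h0that hthatT' hB1 hs.2 y
  have hb2 : ∀ s y, s ∈ Icc (0:ℝ) T → tilde T that w2 s y ≤ B2 :=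
    fun s y hs => tilde_le' h0that hthatT' hB2 hs.2 y
  set M := w1 that γhat + w2 that ηhat - φ (γhat that, ηhat that) with hMdef
  have main : ∀ t x y, t ∈ Icc (0:ℝ) T →
      uscEnv T (tilde T that w1) t x + uscEnv T (tilde T that w2) t y ≤ M + φ (x, y) := by
    intro t x y ht
    set A := uscEnv T (tilde T that w1) t x with hA
    set B := uscEnv T (tilde T that w2) t y with hB
    have key : ∀ ε > (0:ℝ), A + B ≤ M + φ (x, y) + 7 * ε := by
      intro ε hε
      set K : ℝ := max 0 (max (max R1 R2) (max ((2*ε - A)/c1) ((2*ε - B)/c2))) with hKdef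
      have hK0 : (0:ℝ) ≤ K := le_max_left _ _
      have hρc : ContinuousAt (fun a : ℝ => ρ₁ a K) 0 := by
        have h' : Continuous (fun a : ℝ => Function.uncurry ρ₁ (a, K)) :=
          hρ₁.1.comp (continuous_id.prodMk continuous_const)
        exact h'.continuousAt
      obtain ⟨δρ, hδρ0, hδρ⟩ := Metric.continuousAt_iff.1 hρc ε hε
      have hρ0 : ρ₁ 0 K = 0 := hρ₁.2.1 K hK0
      obtain ⟨δφ, hδφ0, hδφ⟩ :=
        Metric.continuousAt_iff.1 (hφ.continuous.continuousAt (x := (x, y))) ε hε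
      set δ : ℝ := min (δρ/2) δφ with hδdef
      have hδ0 : 0 < δ := lt_min (by linarith) hδφ0
      have hf1 := uscEnv_frequently' (g := tilde T that w1) (x := x) ht hε
      have hf2 := uscEnv_frequently' (g := tilde T that w2) (x := y) ht hε
      have hev1 : ∀ᶠ q in nhdsWithin (t, x) ((Icc (0:ℝ) T) ×ˢ (univ : Set (E d))),
          dist q (t, x) < δ ∧ q ∈ (Icc (0:ℝ) T) ×ˢ (univ : Set (E d)) := by
        refine Filter.Eventually.and ?_ eventually_mem_nhdsWithin
        exact Filter.Eventually.filter_mono nhdsWithin_le_nhds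
          ((Metric.isOpen_ball.eventually_mem (Metric.mem_ball_self hδ0)).mono
            (fun q hq => Metric.mem_ball.1 hq))
      have hev2 : ∀ᶠ q in nhdsWithin (t, y) ((Icc (0:ℝ) T) ×ˢ (univ : Set (E d))),
          dist q (t, y) < δ ∧ q ∈ (Icc (0:ℝ) T) ×ˢ (univ : Set (E d)) := by
        refine Filter.Eventually.and ?_ eventually_mem_nhdsWithin
        exact Filter.Eventually.filter_mono nhdsWithin_le_nhds
          ((Metric.isOpen_ball.eventually_mem (Metric.mem_ball_self hδ0)).mono
            (fun q hq => Metric.mem_ball.1 hq))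
      obtain ⟨q, hq1, hq2, hq3⟩ := (hf1.and_eventually hev1).exists
      obtain ⟨q', hq'1, hq'2, hq'3⟩ := (hf2.and_eventually hev2).exists
      obtain ⟨s, x'⟩ := q
      obtain ⟨s', y'⟩ := q'
      rw [← hA] at hq1
      rw [← hB] at hq'1
      simp only at hq1 hq2 hq3 hq'1 hq'2 hq'3
      have hsT : s ∈ Icc (0:ℝ) T := hq3.1
      have hs'T : s' ∈ Icc (0:ℝ) T := hq'3.1
      have hst : |s - t| < δ := by
        have h1 : dist s t ≤ dist (s, x') (t, x) := by
          rw [Prod.dist_eq]; exact le_max_left _ _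
        rw [Real.dist_eq] at h1
        linarith
      have hs't : |s' - t| < δ := by
        have h1 : dist s' t ≤ dist (s', y') (t, y) := by
          rw [Prod.dist_eq]; exact le_max_left _ _
        rw [Real.dist_eq] at h1
        linarith
      have hxx : dist x' x < δ := by
        have h1 : dist x' x ≤ dist (s, x') (t, x) := by
          rw [Prod.dist_eq]; exact le_max_right _ _
        linarith
      have hyy : dist y' y < δ := by
        have h1 : dist y' y ≤ dist (s', y') (t, y) := by
          rw [Prod.dist_eq]; exact le_max_right _ _
        linarith
      -- lift to times ≥ that
      have hthats₁ : that ≤ max s that := le_max_right _ _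
      have hthats₁' : that ≤ max s' that := le_max_right _ _
      have hs₁T : max s that ≤ T := max_le hsT.2 hthatT'
      have hs₁'T : max s' that ≤ T := max_le hs'T.2 hthatT'
      have hg1s₁ : A - ε < tilde T that w1 (max s that) x' :=
        lt_of_lt_of_le hq1 (tilde_le_max' w1 s x')
      have hg2s₁' : B - ε < tilde T that w2 (max s' that) y' :=
        lt_of_lt_of_le hq'1 (tilde_le_max' w2 s' y')
      have hss' : |max s that - max s' that| < δρ := by
        have h1 : |max s that - max s' that| ≤ |s - s'| := abs_max_sub_max_le_abs s s' that
        have h2 : |s - s'| ≤ |s - t| + |s' - t| := by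
          have h3 := abs_sub_le s t s'
          rw [abs_sub_comm t s'] at h3
          linarith
        have hδρ' : δ ≤ δρ / 2 := min_le_left _ _
        calc |max s that - max s' that| ≤ |s - s'| := h1
          _ < δρ := by linarith
      -- near-optimal paths
      have hr1 : tilde T that w1 (max s that) x' - ε < tilde T that w1 (max s that) x' :=
        sub_lt_self _ hε
      obtain ⟨ξ, hmξ, hξend, hξval⟩ := exists_tilde' hthats₁ hs₁T hr1
      have hr2 : tilde T that w2 (max s' that) y' - ε < tilde T that w2 (max s' that) y' :=
        sub_lt_self _ hε
      obtain ⟨ζ, hmζ, hζend, hζval⟩ := exists_tilde' hthats₁' hs₁'T hr2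
      have hAξ : A - 2*ε < w1 (max s that) ξ := by linarith
      have hBζ : B - 2*ε < w2 (max s' that) ζ := by linarith
      -- supNorm bounds
      have hsnξ : supNorm (max s that) ξ ≤ K := by
        by_contra hcon
        push_neg at hcon
        have hR1K : R1 ≤ K := le_max_of_le_right (le_max_of_le_left (le_max_left _ _))
        have hAK : (2*ε - A)/c1 ≤ K :=
          le_max_of_le_right (le_max_of_le_right (le_max_left _ _))
        have hw := hR1 (max s that) ξ (mem_mono' h0that hmξ) (hR1K.trans hcon.le)
        have h2 : (2*ε - A)/c1 < supNorm (max s that) ξ := lt_of_le_of_lt hAK hcon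
        rw [div_lt_iff₀ hc1] at h2
        linarith
      have hsnζ : supNorm (max s' that) ζ ≤ K := by
        by_contra hcon
        push_neg at hcon
        have hR2K : R2 ≤ K := le_max_of_le_right (le_max_of_le_left (le_max_right _ _))
        have hBK : (2*ε - B)/c2 ≤ K :=
          le_max_of_le_right (le_max_of_le_right (le_max_right _ _))
        have hw := hR2 (max s' that) ζ (mem_mono' h0that hmζ) (hR2K.trans hcon.le)
        have h2 : (2*ε - B)/c2 < supNorm (max s' that) ζ := lt_of_le_of_lt hBK hcon
        rw [div_lt_iff₀ hc2] at h2
        linarith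
      -- extend both to common time s₂
      have hs₁s₂ : max s that ≤ max (max s that) (max s' that) := le_max_left _ _
      have hs₁'s₂ : max s' that ≤ max (max s that) (max s' that) := le_max_right _ _
      have hs₂T : max (max s that) (max s' that) ≤ T := max_le hs₁T hs₁'T
      have hmξ' : Mem T that (max (max s that) (max s' that)) (hext (max s that) ξ) :=
        mem_hext' (h0that.trans hthats₁) hs₁s₂ hs₂T hmξ
      have hmζ' : Mem T that (max (max s that) (max s' that)) (hext (max s' that) ζ) :=
        mem_hext' (h0that.trans hthats₁') hs₁'s₂ hs₂T hmζ
      have hshξ := (hshift (max s that) (max (max s that) (max s' that)) ξ hthats₁ hs₁s₂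
        hs₂T (mem_mono' h0that hmξ)).1
      have hshζ := (hshift (max s' that) (max (max s that) (max s' that)) ζ hthats₁' hs₁'s₂
        hs₂T (mem_mono' h0that hmζ)).2
      have hab1 : |max (max s that) (max s' that) - max s that| < δρ := by
        rcases le_total (max s that) (max s' that) with h | h
        · rw [max_eq_right h]
          calc |max s' that - max s that| = |max s that - max s' that| := abs_sub_comm _ _
            _ < δρ := hss'
        · rw [max_eq_left h]
          simpa using hδρ0
      have hab2 : |max (max s that) (max s' that) - max s' that| < δρ := by
        rcases le_total (max s that) (max s' that) with h | h
        · rw [max_eq_right h]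
          simpa using hδρ0
        · rw [max_eq_left h]
          exact hss'
      have hρb1 : ρ₁ |max (max s that) (max s' that) - max s that| (supNorm (max s that) ξ)
          < ε := by
        have hmono := hρ₁.2.2.2.2 |max (max s that) (max s' that) - max s that|
          (supNorm (max s that) ξ) K (abs_nonneg _) (supNorm_nonneg' _ _) hsnξ
        have hcl := hδρ (x := |max (max s that) (max s' that) - max s that|)
          (by rw [Real.dist_eq]; simpa using hab1)
        rw [hρ0, Real.dist_eq, sub_zero] at hcl
        calc ρ₁ _ (supNorm (max s that) ξ) ≤ ρ₁ _ K := hmono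
          _ ≤ |ρ₁ _ K| := le_abs_self _
          _ < ε := hcl
      have hρb2 : ρ₁ |max (max s that) (max s' that) - max s' that| (supNorm (max s' that) ζ)
          < ε := by
        have hmono := hρ₁.2.2.2.2 |max (max s that) (max s' that) - max s' that|
          (supNorm (max s' that) ζ) K (abs_nonneg _) (supNorm_nonneg' _ _) hsnζ
        have hcl := hδρ (x := |max (max s that) (max s' that) - max s' that|)
          (by rw [Real.dist_eq]; simpa using hab2)
        rw [hρ0, Real.dist_eq, sub_zero] at hcl
        calc ρ₁ _ (supNorm (max s' that) ζ) ≤ ρ₁ _ K := hmono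
          _ ≤ |ρ₁ _ K| := le_abs_self _
          _ < ε := hcl
      have hw1s₂ : A - 3*ε < w1 (max (max s that) (max s' that)) (hext (max s that) ξ) := by
        linarith
      have hw2s₂ : B - 3*ε < w2 (max (max s that) (max s' that)) (hext (max s' that) ζ) := by
        linarith
      -- apply the maximality
      have hfin := hmax (max (max s that) (max s' that)) (hext (max s that) ξ)
        (hext (max s' that) ζ) hmξ' hmζ'
      rw [hext_endpoint' hs₁s₂ ξ, hext_endpoint' hs₁'s₂ ζ, hξend, hζend] at hfin
      have hφb : dist (φ (x', y')) (φ (x, y)) < ε := by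
        apply hδφ
        rw [Prod.dist_eq]
        exact max_lt (lt_of_lt_of_le hxx (min_le_right _ _))
          (lt_of_lt_of_le hyy (min_le_right _ _))
      rw [Real.dist_eq] at hφb
      have hφb' : φ (x', y') < φ (x, y) + ε := by
        have := le_abs_self (φ (x', y') - φ (x, y))
        linarith
      linarith
    refine le_of_forall_pos_le_add fun ε hε => ?_
    have h7 := key (ε/7) (by positivity)
    linarith
  have hge1 : w1 that γhat ≤ uscEnv T (tilde T that w1) that (γhat that) :=
    le_trans (le_tilde' h0that hB1 le_rfl hγ rfl) (uscEnv_ge' hb1 ⟨h0that, hthatT'⟩)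
  have hge2 : w2 that ηhat ≤ uscEnv T (tilde T that w2) that (ηhat that) :=
    le_trans (le_tilde' h0that hB2 le_rfl hη rfl) (uscEnv_ge' hb2 ⟨h0that, hthatT'⟩)
  have hmm := main that (γhat that) (ηhat that) ⟨h0that, hthatT'⟩
  rw [hMdef] at hmm
  have heq1 : uscEnv T (tilde T that w1) that (γhat that) = w1 that γhat :=
    le_antisymm (by linarith) hge1
  have heq2 : uscEnv T (tilde T that w2) that (ηhat that) = w2 that ηhat :=
    le_antisymm (by linarith) hge2
  refine ⟨?_, heq1, heq2⟩
  intro t x y ht0 htT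
  have h := main t x y ⟨ht0, htT⟩
  rw [hMdef] at h
  rw [heq1, heq2]
  linarith
end PHJB
end
end
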